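/- For every d ≥ 1, every j ∈ {1,…,d}, every k ≥ 1, every pair of sites x, y ∈ ℤ^d and every configuration η ∈ Ω, the following gradient decomposition holds: c^{(k),j}_{x,y}(η)·[η(y) − η(x)] = P^{(k),j}(τ^y η) − P^{(k),j}(τ^x η) − (∇_j A^{(k),j}_{x,y})(η). -/

import Mathlib

open Finset

noncomputable section

/-- The canonical basis vector `e_j` of `ℤ^d`. -/
def ej (d : ℕ) (j : Fin d) : Fin d → ℤ := fun i => if i = j then 1 else 0

/-- The translation `τ^x η` of a configuration. -/
def tau {d : ℕ} (x : Fin d → ℤ) (η : (Fin d → ℤ) → ℝ) : (Fin d → ℤ) → ℝ :=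
  fun z => η (z + x)

/-- The (long-jump) constraint `r^{(k),j}_{x,y}(η)`:
`Σ_{ℓ=1}^{k} Π_{i=ℓ−k, i∉{0,1}}^{ℓ} ζ_i`, where `ζ_i = η(x + i e_j)` for `i ≤ −1` and
`ζ_i = η(y + (i−1) e_j)` for `i ≥ 2`. -/
def rConstr (d k : ℕ) (j : Fin d) (x y : Fin d → ℤ) (η : (Fin d → ℤ) → ℝ) : ℝ :=
  ∑ ℓ ∈ Finset.Icc 1 k,
    ∏ i ∈ (Finset.Icc ((ℓ : ℤ) - (k : ℤ)) (ℓ : ℤ)).filter (fun i => i ≠ 0 ∧ i ≠ 1),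
      (if i ≤ -1 then η (x + i • ej d j) else η (y + (i - 1) • ej d j))

/-- The symmetric constraint `c^{(k),j}_{x,y}`. -/
def cConstr (d k : ℕ) (j : Fin d) (x y : Fin d → ℤ) (η : (Fin d → ℤ) → ℝ) : ℝ :=
  (rConstr d k j x y η + rConstr d k j y x η) / 2

/-- `P^{(k),j}(η) = (1/2) Π_{i=0}^{k−1} η(i e_j) + (1/2) Π_{i=0}^{k−1} η(−i e_j)`. -/
def Pfun (d k : ℕ) (j : Fin d) (η : (Fin d → ℤ) → ℝ) : ℝ :=
  (1 / 2) * ∏ i ∈ Finset.range k, η ((i : ℤ) • ej d j)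
    + (1 / 2) * ∏ i ∈ Finset.range k, η ((-(i : ℤ)) • ej d j)

/-- `M^{(k),j}_{x,y}(η)
  = (1/2) Σ_{ℓ=1}^{k−1} [Π_{i₀=1}^{ℓ} η(x − i₀ e_j)]·[Π_{i₁=0}^{k−1−ℓ} η(y + i₁ e_j)]`. -/
def Mfun (d k : ℕ) (j : Fin d) (x y : Fin d → ℤ) (η : (Fin d → ℤ) → ℝ) : ℝ :=
  (1 / 2) * ∑ ℓ ∈ Finset.Icc 1 (k - 1),
    (∏ i0 ∈ Finset.Icc 1 ℓ, η (x - (i0 : ℤ) • ej d j)) *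
      (∏ i1 ∈ Finset.range (k - ℓ), η (y + (i1 : ℤ) • ej d j))

/-- The antisymmetric part `A^{(k),j}_{x,y} = M^{(k),j}_{x,y} − M^{(k),j}_{y,x}`. -/
def Afun (d k : ℕ) (j : Fin d) (x y : Fin d → ℤ) (η : (Fin d → ℤ) → ℝ) : ℝ :=
  Mfun d k j x y η - Mfun d k j y x η


lemma prodIccMul (f : ℕ → ℝ) (n : ℕ) :
    (∏ m ∈ Finset.Icc 1 n, f m) * f 0 = ∏ m ∈ Finset.range (n+1), f m := by
  have h : Finset.range (n+1) = insert 0 (Finset.Icc 1 n) := by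
    ext m; simp [Finset.mem_range, Finset.mem_Icc]; omega
  rw [h, Finset.prod_insert (by simp)]; ring

lemma key (k : ℕ) (hk : 1 ≤ k) (a b : ℕ → ℝ) :
    (∑ ℓ ∈ Finset.Icc 1 k,
        (∏ m ∈ Finset.Icc 1 (k-ℓ), a m) * (∏ m ∈ Finset.Icc 1 (ℓ-1), b m)) * (b 0 - a 0)
    = (∏ m ∈ Finset.range k, b m) - (∏ m ∈ Finset.range k, a m)
      - ((∑ ℓ ∈ Finset.Icc 1 (k-1),
            (∏ m ∈ Finset.range ℓ, a m) * (∏ m ∈ Finset.Icc 1 (k-ℓ), b m))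
        - (∑ ℓ ∈ Finset.Icc 1 (k-1),
            (∏ m ∈ Finset.Icc 1 ℓ, a m) * (∏ m ∈ Finset.range (k-ℓ), b m))) := by
  set t : ℕ → ℝ := fun ℓ => (∏ m ∈ Finset.Icc 1 (k-ℓ), a m) * (∏ m ∈ Finset.range ℓ, b m)
    with ht
  set s : ℕ → ℝ := fun ℓ => (∏ m ∈ Finset.range (k-ℓ+1), a m) * (∏ m ∈ Finset.Icc 1 (ℓ-1), b m)
    with hs
  have step1 : (∑ ℓ ∈ Finset.Icc 1 k,
      (∏ m ∈ Finset.Icc 1 (k-ℓ), a m) * (∏ m ∈ Finset.Icc 1 (ℓ-1), b m)) * (b 0 - a 0)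
      = (∑ ℓ ∈ Finset.Icc 1 k, t ℓ) - (∑ ℓ ∈ Finset.Icc 1 k, s ℓ) := by
    rw [mul_sub, Finset.sum_mul, Finset.sum_mul]
    congr 1
    · refine Finset.sum_congr rfl (fun ℓ hℓ => ?_)
      simp only [Finset.mem_Icc] at hℓ
      rw [ht, mul_assoc, prodIccMul]
      have : ℓ - 1 + 1 = ℓ := by omega
      rw [this]
    · refine Finset.sum_congr rfl (fun ℓ hℓ => ?_)
      simp only [Finset.mem_Icc] at hℓ
      rw [hs, mul_right_comm, prodIccMul]
  have step2 : (∑ ℓ ∈ Finset.Icc 1 k, t ℓ) = t k + ∑ ℓ ∈ Finset.Icc 1 (k-1), t ℓ := by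
    have h : Finset.Icc 1 k = insert k (Finset.Icc 1 (k-1)) := by
      ext m; simp [Finset.mem_Icc]; omega
    rw [h, Finset.sum_insert (by simp [Finset.mem_Icc]; omega)]
  have step3 : (∑ ℓ ∈ Finset.Icc 1 k, s ℓ) = s 1 + ∑ ℓ ∈ Finset.Icc 2 k, s ℓ := by
    have h : Finset.Icc 1 k = insert 1 (Finset.Icc 2 k) := by
      ext m; simp [Finset.mem_Icc]; omega
    rw [h, Finset.sum_insert (by simp [Finset.mem_Icc])]
  have step4 : (∑ ℓ ∈ Finset.Icc 1 (k-1),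
      (∏ m ∈ Finset.range ℓ, a m) * (∏ m ∈ Finset.Icc 1 (k-ℓ), b m))
      = ∑ ℓ ∈ Finset.Icc 2 k, s ℓ := by
    refine Finset.sum_nbij' (fun ℓ => k - ℓ + 1) (fun ℓ => k - ℓ + 1) ?_ ?_ ?_ ?_ ?_
    · intro ℓ hℓ; simp only [Finset.mem_Icc] at *; omega
    · intro ℓ hℓ; simp only [Finset.mem_Icc] at *; omega
    · intro ℓ hℓ; simp only [Finset.mem_Icc] at hℓ
      show k - (k - ℓ + 1) + 1 = ℓ; omega
    · intro ℓ hℓ; simp only [Finset.mem_Icc] at hℓ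
      show k - (k - ℓ + 1) + 1 = ℓ; omega
    · intro ℓ hℓ; simp only [Finset.mem_Icc] at hℓ
      show _ = (∏ m ∈ Finset.range (k - (k - ℓ + 1) + 1), a m) * ∏ m ∈ Finset.Icc 1 (k - ℓ + 1 - 1), b m
      have h1 : k - (k - ℓ + 1) + 1 = ℓ := by omega
      have h2 : k - ℓ + 1 - 1 = k - ℓ := by omega
      rw [h1, h2]
  have step5 : (∑ ℓ ∈ Finset.Icc 1 (k-1),
      (∏ m ∈ Finset.Icc 1 ℓ, a m) * (∏ m ∈ Finset.range (k-ℓ), b m))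
      = ∑ ℓ ∈ Finset.Icc 1 (k-1), t ℓ := by
    refine Finset.sum_nbij' (fun ℓ => k - ℓ) (fun ℓ => k - ℓ) ?_ ?_ ?_ ?_ ?_
    · intro ℓ hℓ; simp only [Finset.mem_Icc] at *; omega
    · intro ℓ hℓ; simp only [Finset.mem_Icc] at *; omega
    · intro ℓ hℓ; simp only [Finset.mem_Icc] at hℓ
      show k - (k - ℓ) = ℓ; omega
    · intro ℓ hℓ; simp only [Finset.mem_Icc] at hℓ
      show k - (k - ℓ) = ℓ; omega
    · intro ℓ hℓ; simp only [Finset.mem_Icc] at hℓ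
      show _ = (∏ m ∈ Finset.Icc 1 (k - (k - ℓ)), a m) * ∏ m ∈ Finset.range (k - ℓ), b m
      have h1 : k - (k - ℓ) = ℓ := by omega
      rw [h1]
  have htk : t k = ∏ m ∈ Finset.range k, b m := by
    rw [ht]; simp
  have hs1 : s 1 = ∏ m ∈ Finset.range k, a m := by
    show (∏ m ∈ Finset.range (k - 1 + 1), a m) * ∏ m ∈ Finset.Icc 1 (1 - 1), b m = _
    have : k - 1 + 1 = k := by omega
    rw [this]; simp
  rw [step1, step2, step3, step4, step5, htk, hs1]
  ring


lemma rConstr_eq (d k : ℕ) (j : Fin d) (x y : Fin d → ℤ) (η : (Fin d → ℤ) → ℝ) :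
    rConstr d k j x y η
    = ∑ ℓ ∈ Finset.Icc 1 k,
        (∏ m ∈ Finset.Icc 1 (k - ℓ), η (x - (m : ℤ) • ej d j)) *
          (∏ m ∈ Finset.Icc 1 (ℓ - 1), η (y + (m : ℤ) • ej d j)) := by
  unfold rConstr
  refine Finset.sum_congr rfl (fun ℓ hℓ => ?_)
  simp only [Finset.mem_Icc] at hℓ
  have hset : (Finset.Icc ((ℓ : ℤ) - (k : ℤ)) (ℓ : ℤ)).filter (fun i => i ≠ 0 ∧ i ≠ 1)
      = Finset.Icc ((ℓ : ℤ) - (k : ℤ)) (-1) ∪ Finset.Icc 2 (ℓ : ℤ) := by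
    ext i
    simp only [Finset.mem_filter, Finset.mem_Icc, Finset.mem_union]
    omega
  have hdis : Disjoint (Finset.Icc ((ℓ : ℤ) - (k : ℤ)) (-1)) (Finset.Icc 2 (ℓ : ℤ)) := by
    rw [Finset.disjoint_left]
    intro i hi hi'
    simp only [Finset.mem_Icc] at hi hi'
    omega
  rw [hset, Finset.prod_union hdis]
  congr 1
  · have himg : Finset.Icc ((ℓ : ℤ) - (k : ℤ)) (-1)
        = Finset.image (fun m : ℕ => -(m : ℤ)) (Finset.Icc 1 (k - ℓ)) := by
      ext i
      simp only [Finset.mem_Icc, Finset.mem_image]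
      constructor
      · intro h
        exact ⟨(-i).toNat, by omega, by omega⟩
      · rintro ⟨m, hm, rfl⟩; omega
    rw [himg, Finset.prod_image (by intro m _ n _ h; simp only at h; omega)]
    refine Finset.prod_congr rfl (fun m hm => ?_)
    simp only [Finset.mem_Icc] at hm
    rw [if_pos (by omega : -(m : ℤ) ≤ -1), neg_smul, ← sub_eq_add_neg]
  · have himg : Finset.Icc (2 : ℤ) (ℓ : ℤ)
        = Finset.image (fun m : ℕ => (m : ℤ) + 1) (Finset.Icc 1 (ℓ - 1)) := by
      ext i
      simp only [Finset.mem_Icc, Finset.mem_image]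
      constructor
      · intro h
        exact ⟨(i - 1).toNat, by omega, by omega⟩
      · rintro ⟨m, hm, rfl⟩; omega
    rw [himg, Finset.prod_image (by intro m _ n _ h; simp only at h; omega)]
    refine Finset.prod_congr rfl (fun m hm => ?_)
    simp only [Finset.mem_Icc] at hm
    rw [if_neg (by omega : ¬((m : ℤ) + 1 ≤ -1)), add_sub_cancel_right]

lemma Pfun_tau (d k : ℕ) (j : Fin d) (v : Fin d → ℤ) (η : (Fin d → ℤ) → ℝ) :
    Pfun d k j (tau v η)
    = (1 / 2) * (∏ i ∈ Finset.range k, η (v + (i : ℤ) • ej d j))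
      + (1 / 2) * (∏ i ∈ Finset.range k, η (v - (i : ℤ) • ej d j)) := by
  unfold Pfun tau
  congr 1
  · congr 1
    refine Finset.prod_congr rfl (fun i _ => ?_)
    rw [add_comm]
  · congr 1
    refine Finset.prod_congr rfl (fun i _ => ?_)
    rw [neg_smul, neg_add_eq_sub]

lemma Mfun_tau (d k : ℕ) (j : Fin d) (x y : Fin d → ℤ) (η : (Fin d → ℤ) → ℝ) :
    Mfun d k j x y (tau (ej d j) η)
    = (1 / 2) * ∑ ℓ ∈ Finset.Icc 1 (k - 1),
        (∏ m ∈ Finset.range ℓ, η (x - (m : ℤ) • ej d j)) *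
          (∏ m ∈ Finset.Icc 1 (k - ℓ), η (y + (m : ℤ) • ej d j)) := by
  unfold Mfun tau
  congr 1
  refine Finset.sum_congr rfl (fun ℓ hℓ => ?_)
  congr 1
  · have himg : Finset.Icc 1 ℓ = Finset.image (fun m : ℕ => m + 1) (Finset.range ℓ) := by
      ext m
      simp only [Finset.mem_Icc, Finset.mem_image, Finset.mem_range]
      constructor
      · intro h; exact ⟨m - 1, by omega, by omega⟩
      · rintro ⟨n, hn, rfl⟩; omega
    rw [himg, Finset.prod_image (by intro a _ b _ h; simp only at h; omega)]
    refine Finset.prod_congr rfl (fun m _ => ?_)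
    congr 1
    push_cast
    ext t
    simp only [Pi.add_apply, Pi.sub_apply, Pi.smul_apply, smul_eq_mul]
    ring
  · have himg : Finset.Icc 1 (k - ℓ) = Finset.image (fun m : ℕ => m + 1) (Finset.range (k - ℓ)) := by
      ext m
      simp only [Finset.mem_Icc, Finset.mem_image, Finset.mem_range]
      constructor
      · intro h; exact ⟨m - 1, by omega, by omega⟩
      · rintro ⟨n, hn, rfl⟩; omega
    rw [himg, Finset.prod_image (by intro a _ b _ h; simp only at h; omega)]
    refine Finset.prod_congr rfl (fun m _ => ?_)
    congr 1
    push_cast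
    ext t
    simp only [Pi.add_apply, Pi.smul_apply, smul_eq_mul]
    ring

/-- the gradient decomposition
`c^{(k),j}_{x,y}(η)·[η(y) − η(x)] = P^{(k),j}(τ^y η) − P^{(k),j}(τ^x η) − (∇_j A^{(k),j}_{x,y})(η)`,
where `(∇_j F)(η) = F(τ_j η) − F(η)` and `τ_j = τ^{e_j}`. -/
theorem gradient_decomposition
    (d : ℕ) (hd : 1 ≤ d) (Ne : ℕ) (hNe : 1 ≤ Ne)
    (j : Fin d) (k : ℕ) (hk : 1 ≤ k)
    (x y : Fin d → ℤ) (η : (Fin d → ℤ) → ℝ)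
    (hη : ∀ z : Fin d → ℤ, η z ∈ Set.Icc (0 : ℝ) (Ne : ℝ)) :
    cConstr d k j x y η * (η y - η x)
      = Pfun d k j (tau y η) - Pfun d k j (tau x η)
        - (Afun d k j x y (tau (ej d j) η) - Afun d k j x y η) := by
  have K1 := key k hk (fun m => η (x - (m : ℤ) • ej d j)) (fun m => η (y + (m : ℤ) • ej d j))
  have K2 := key k hk (fun m => η (y - (m : ℤ) • ej d j)) (fun m => η (x + (m : ℤ) • ej d j))
  simp only [CharP.cast_eq_zero, zero_smul, sub_zero, add_zero] at K1 K2
  simp only [cConstr, Afun]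
  rw [rConstr_eq d k j x y η, rConstr_eq d k j y x η, Pfun_tau, Pfun_tau,
    Mfun_tau d k j x y η, Mfun_tau d k j y x η]
  simp only [Mfun]
  linear_combination K1 / 2 - K2 / 2

end
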